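/- arXiv:2604.01488 — 2 statements merged into one kernel-verified Lean document; each statement's English description precedes it below -/
import Mathlib

section
/- Let k ≥ 3 and let B be a nonempty finite word over ℕ that is a factor of W_N^{(k)} for some N ∈ ℕ. Then the shifted word k ⊕ B is a factor of W_{N+k}^{(k)}; in particular, any shift k ⊕ B of a factor of some iterate is again a factor of some iterate. -/
/-- Image of a single letter `m = k*i + j` under the k-Bonacci morphism `φ_k` over ℕ:
`φ_k(ki+j) = (ki)(ki+j+1)` for `0 ≤ j ≤ k-2`, and `φ_k(ki+(k-1)) = ki+k`. -/
def phiLetter (k m : ℕ) : List ℕ :=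
  if m % k = k - 1 then [m + 1] else [k * (m / k), m + 1]

/-- The morphism `φ_k`, extended to words by concatenation. -/
def phi (k : ℕ) (w : List ℕ) : List ℕ := (w.map (phiLetter k)).flatten

/-- `W k n = φ_k^n(0)`, the n-th iterate of `φ_k` applied to the one-letter word `0`. -/
def W (k n : ℕ) : List ℕ := (phi k)^[n] [0]

/-- `shift n w = n ⊕ w`, adding `n` to every letter. -/
def shift (n : ℕ) (w : List ℕ) : List ℕ := w.map (· + n)

/-- `occ B w = |w|_B`, the number of (possibly overlapping) occurrences of `B`
as a factor of `w`, i.e. the number of positions `i` at which `B` is a prefix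
of the suffix of `w` starting at `i`. -/
def occ (B w : List ℕ) : ℕ :=
  ((List.range (w.length + 1)).filter (fun i => decide (B <+: w.drop i))).length

/-- `C k B = C_B^{(k)}(y) = Σ_{n≥0} |W_n^{(k)}|_B yⁿ` as a formal power series over ℚ. -/
noncomputable def C (k : ℕ) (B : List ℕ) : PowerSeries ℚ :=
  PowerSeries.mk (fun n => (occ B (W k n) : ℚ))

/-- `Hgf r = H_r(y)`, the multiplicative inverse of `1 - y - y² - ⋯ - y^r`. -/
noncomputable def Hgf (r : ℕ) : PowerSeries ℚ :=
  (1 - ∑ j ∈ Finset.Icc 1 r, (PowerSeries.X : PowerSeries ℚ) ^ j)⁻¹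

/-- `Ggf r = G_r(y) = (1 - y^r)·H_r(y) - 1`. -/
noncomputable def Ggf (r : ℕ) : PowerSeries ℚ :=
  (1 - (PowerSeries.X : PowerSeries ℚ) ^ r) * Hgf r - 1

/-- The set `B^{(k)} = B_1^{(k)} ∪ B_2^{(k)} ∪ B_3^{(k)}` of length-2 words. -/
def Bset (k : ℕ) : Set (List ℕ) :=
  {U | (∃ i a : ℕ, 1 ≤ a ∧ U = [a + k * i, k + k * i]) ∨
       (∃ i b : ℕ, 1 ≤ b ∧ b ≤ k - 1 ∧ U = [k * i, b + k * i]) ∨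
       (∃ a : ℕ, 1 ≤ a ∧ U = [a, 0])}

/-- The list of blocks in the decomposition of `W_n^{(k)}` for `n ≥ k`:
`W_{n-1}, …, W_{n-k+1}, k ⊕ W_{n-k}`. -/
def blocks (k n : ℕ) : List (List ℕ) :=
  (List.range (k - 1)).map (fun j => W k (n - 1 - j)) ++ [shift k (W k (n - k))]

lemma phi_append (k : ℕ) (a b : List ℕ) : phi k (a ++ b) = phi k a ++ phi k b := by
  simp [phi]

lemma phi_infix (k : ℕ) {u v : List ℕ} (h : u <:+: v) : phi k u <:+: phi k v := by
  obtain ⟨s, t, rfl⟩ := h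
  exact ⟨phi k s, phi k t, by simp [phi_append]⟩

lemma phi_iter_infix (k n : ℕ) {u v : List ℕ} (h : u <:+: v) :
    (phi k)^[n] u <:+: (phi k)^[n] v := by
  induction n with
  | zero => simpa
  | succ n ih => simpa [Function.iterate_succ_apply'] using phi_infix k ih

lemma phiLetter_shift (k m : ℕ) (hk : 0 < k) :
    phiLetter k (m + k) = (phiLetter k m).map (· + k) := by
  unfold phiLetter
  rw [Nat.add_mod_right, Nat.add_div_right _ hk]
  split <;> simp [Nat.mul_add] <;> omega

lemma phi_shift (k : ℕ) (hk : 0 < k) (w : List ℕ) :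
    phi k (shift k w) = shift k (phi k w) := by
  induction w with
  | nil => rfl
  | cons a w ih =>
    simp only [shift, List.map_cons, phi, List.flatten_cons] at *
    rw [phiLetter_shift k a hk, ih, List.map_append]

lemma W_suffix (k n : ℕ) : ∃ p, W k n = p ++ [n] := by
  induction n with
  | zero => exact ⟨[], rfl⟩
  | succ n ih =>
    obtain ⟨p, hp⟩ := ih
    have h : W k (n + 1) = phi k p ++ phiLetter k n := by
      rw [W, Function.iterate_succ_apply', ← W, hp, phi_append]
      simp [phi]
    unfold phiLetter at h
    split at h
    · exact ⟨phi k p, h⟩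
    · exact ⟨phi k p ++ [k * (n / k)], by simpa using h⟩

theorem stmt2 (k N : ℕ) (hk : 3 ≤ k) (B : List ℕ) (hB : B ≠ [])
    (hfac : B <:+: W k N) :
    shift k B <:+: W k (N + k) := by
  have hk0 : 0 < k := by omega
  have h1 : ∀ n, shift k (W k n) = (phi k)^[n] [k] := by
    intro n
    induction n with
    | zero => simp [W, shift]
    | succ n ih =>
      rw [W, Function.iterate_succ_apply', ← W, ← phi_shift k hk0, ih,
        Function.iterate_succ_apply']
  have h2 : ([k] : List ℕ) <:+: W k k := by
    obtain ⟨p, hp⟩ := W_suffix k k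
    exact ⟨p, [], by simp [hp]⟩
  have h3 : (phi k)^[N] [k] <:+: (phi k)^[N] (W k k) := phi_iter_infix _ _ h2
  have h4 : (phi k)^[N] (W k k) = W k (N + k) := by
    rw [W, W, Function.iterate_add_apply]
  have h5 : shift k B <:+: shift k (W k N) := hfac.map _
  rw [← h4]
  rw [h1] at h5
  exact h5.trans h3
end

section
/- Let k ≥ 3. A length-2 word over ℕ is a factor of some iterate W_n^{(k)} (n ∈ ℕ) if and only if it belongs to B^{(k)}; that is, the union over n ∈ ℕ of the sets of length-2 factors of W_n^{(k)} equals B^{(k)}. (Since each W_n^{(k)} is a prefix of W_{n+1}^{(k)}, this union is exactly the set of length-2 factors of the infinite k-Bonacci word over ℕ.) -/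
/-- first letter of `phiLetter k y` -/
def fstep (k y : ℕ) : ℕ := if y % k = k - 1 then y + 1 else k * (y / k)

lemma phi_cons (k m : ℕ) (w : List ℕ) : phi k (m :: w) = phiLetter k m ++ phi k w := by
  simp [phi]

lemma W_succ (k n : ℕ) : W k (n + 1) = phi k (W k n) := by
  simp [W, Function.iterate_succ_apply']

lemma phiLetter_head (k m : ℕ) : ∃ T, phiLetter k m = fstep k m :: T := by
  unfold phiLetter fstep
  split
  · exact ⟨[], rfl⟩
  · exact ⟨[m + 1], rfl⟩

lemma phiLetter_last (k m : ℕ) : ∃ A, phiLetter k m = A ++ [m + 1] := by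
  unfold phiLetter
  split
  · exact ⟨[], rfl⟩
  · exact ⟨[k * (m / k)], rfl⟩

lemma mem_letters (k : ℕ) : ∀ m, ∃ n, m ∈ W k n := by
  intro m
  induction m with
  | zero => exact ⟨0, by simp [W]⟩
  | succ m ih =>
    obtain ⟨n, hn⟩ := ih
    refine ⟨n + 1, ?_⟩
    rw [W_succ]
    unfold phi
    rw [List.mem_flatten]
    refine ⟨phiLetter k m, List.mem_map_of_mem hn, ?_⟩
    unfold phiLetter
    split <;> simp

lemma infix_step {k x y n : ℕ} (h : [x, y] <:+: W k n) :
    [x + 1, fstep k y] <:+: W k (n + 1) := by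
  obtain ⟨s, t, hw⟩ := h
  obtain ⟨A, hA⟩ := phiLetter_last k x
  obtain ⟨T, hT⟩ := phiLetter_head k y
  refine ⟨phi k s ++ A, T ++ phi k t, ?_⟩
  rw [W_succ, ← hw]
  have : s ++ [x, y] ++ t = s ++ ([x] ++ ([y] ++ t)) := by simp
  rw [this, phi_append, phi_append]
  simp [phi, hA, hT]

lemma internal_infix {k m n : ℕ} (hm : m ∈ W k n) (hr : m % k ≠ k - 1) :
    [k * (m / k), m + 1] <:+: W k (n + 1) := by
  obtain ⟨s, t, hw⟩ := List.append_of_mem hm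
  refine ⟨phi k s, phi k t, ?_⟩
  rw [W_succ, hw]
  have : s ++ m :: t = s ++ ([m] ++ t) := by simp
  rw [this, phi_append, phi_append]
  have : phi k [m] = [k * (m / k), m + 1] := by simp [phi, phiLetter, hr]
  rw [this, List.append_assoc]

lemma infix2_append {u v : ℕ} {A B : List ℕ} (h : [u, v] <:+: A ++ B) :
    [u, v] <:+: A ∨ [u, v] <:+: B ∨ (∃ A' B', A = A' ++ [u] ∧ B = v :: B') := by
  induction A with
  | nil => exact Or.inr (Or.inl (by simpa using h))
  | cons a A ih =>
    rw [List.cons_append, List.infix_cons_iff] at h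
    rcases h with h | h
    · -- [u,v] is a prefix of a :: (A ++ B)
      obtain ⟨t, ht⟩ := h
      have ht' : u = a ∧ v :: t = A ++ B := by simpa using ht
      obtain ⟨rfl, ht'⟩ := ht'
      cases A with
      | nil =>
        exact Or.inr (Or.inr ⟨[], t, by simp, by simpa using ht'.symm⟩)
      | cons a' A' =>
        have hv : v = a' ∧ t = A' ++ B := by simpa using ht'
        exact Or.inl ⟨[], A', by simp [hv.1]⟩
    · rcases ih h with h' | h' | ⟨A', B', h1, h2⟩
      · exact Or.inl (List.infix_cons_iff.mpr (Or.inr h'))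
      · exact Or.inr (Or.inl h')
      · exact Or.inr (Or.inr ⟨a :: A', B', by rw [h1]; rfl, h2⟩)

lemma classify {k u v : ℕ} (w : List ℕ) (h : [u, v] <:+: phi k w) :
    (∃ m ∈ w, m % k ≠ k - 1 ∧ u = k * (m / k) ∧ v = m + 1) ∨
    (∃ x y, [x, y] <:+: w ∧ u = x + 1 ∧ v = fstep k y) := by
  induction w with
  | nil => simp [phi] at h
  | cons m w ih =>
    rw [phi_cons] at h
    rcases infix2_append h with h' | h' | ⟨A', B', h1, h2⟩
    · -- inside phiLetter k m
      by_cases hr : m % k = k - 1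
      · exfalso
        have := h'.length_le
        simp [phiLetter, hr] at this
      · have heq : [u, v] = phiLetter k m := by
          apply h'.sublist.eq_of_length
          simp [phiLetter, hr]
        simp only [phiLetter, if_neg hr] at heq
        have huv : u = k * (m / k) ∧ v = m + 1 := by simpa using heq
        exact Or.inl ⟨m, by simp, hr, huv.1, huv.2⟩
    · rcases ih h' with ⟨m', hm', h3⟩ | ⟨x, y, hxy, h3⟩
      · exact Or.inl ⟨m', List.mem_cons_of_mem _ hm', h3⟩
      · exact Or.inr ⟨x, y, hxy.trans (List.infix_cons_iff.mpr (Or.inr List.infix_rfl)), h3⟩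
    · -- boundary
      obtain ⟨A, hA⟩ := phiLetter_last k m
      have hu : u = m + 1 := by
        have := hA ▸ h1
        have := List.append_inj_right' this rfl
        simpa using this.symm
      cases w with
      | nil => simp [phi] at h2
      | cons y w' =>
        obtain ⟨T, hT⟩ := phiLetter_head k y
        rw [phi_cons, hT] at h2
        have hv : v = fstep k y := by
          have := congrArg (List.head? ·) h2
          simpa using this.symm
        exact Or.inr ⟨m, y, ⟨[], w', by simp⟩, hu, hv⟩

lemma fstep_eq {k : ℕ} (hkpos : 0 < k) (i b : ℕ) (hb : b < k) :
    fstep k (k * i + b) = if b = k - 1 then k * i + b + 1 else k * i := by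
  have hmod : (k * i + b) % k = b := by
    rw [Nat.mul_add_mod]
    exact Nat.mod_eq_of_lt hb
  have hdiv : (k * i + b) / k = i := by
    rw [Nat.mul_add_div hkpos, Nat.div_eq_of_lt hb]
    omega
  simp [fstep, hmod, hdiv]

lemma fstep_fix {k : ℕ} (hk : 3 ≤ k) (i : ℕ) : fstep k (k + k * i) = k + k * i := by
  have h := fstep_eq (show 0 < k by omega) (i + 1) 0 (by omega)
  rw [if_neg (show ¬ (0 : ℕ) = k - 1 by omega)] at h
  rw [show k + k * i = k * (i + 1) + 0 from by ring, h]
  ring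

lemma fstep_zero {k : ℕ} (hk : 3 ≤ k) : fstep k 0 = 0 := by
  have h := fstep_eq (show 0 < k by omega) 0 0 (by omega)
  rw [if_neg (show ¬ (0 : ℕ) = k - 1 by omega)] at h
  simpa using h

lemma iter_fix {k x y : ℕ} (hfix : fstep k y = y) {n : ℕ} (h : [x, y] <:+: W k n) (a : ℕ) :
    ∃ m, [x + a, y] <:+: W k m := by
  induction a with
  | zero => exact ⟨n, h⟩
  | succ a ih =>
    obtain ⟨m, hm⟩ := ih
    have h2 := infix_step hm
    rw [hfix] at h2
    exact ⟨m + 1, by rw [← Nat.add_assoc]; exact h2⟩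

lemma step_mem {k : ℕ} (hk : 3 ≤ k) {x y : ℕ} (h : [x, y] ∈ Bset k) :
    [x + 1, fstep k y] ∈ Bset k := by
  simp only [Bset, Set.mem_setOf_eq] at h ⊢
  rcases h with ⟨i, a, ha, hU⟩ | ⟨i, b, hb1, hb2, hU⟩ | ⟨a, ha, hU⟩
  · have hxy : x = a + k * i ∧ y = k + k * i := by
      have h1 := (List.cons.injEq .. ▸ hU).1
      have h2 := (List.cons.injEq .. ▸ hU).2
      exact ⟨h1, by simpa using h2⟩
    obtain ⟨hx, hy⟩ := hxy
    refine Or.inl ⟨i, a + 1, by omega, ?_⟩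
    rw [hx, hy, fstep_fix hk i, show a + k * i + 1 = a + 1 + k * i from by ring]
  · have hxy : x = k * i ∧ y = b + k * i := by
      have h1 := (List.cons.injEq .. ▸ hU).1
      have h2 := (List.cons.injEq .. ▸ hU).2
      exact ⟨h1, by simpa using h2⟩
    obtain ⟨hx, hy⟩ := hxy
    have hfs := fstep_eq (show 0 < k by omega) i b (by omega)
    rw [show k * i + b = b + k * i from by ring] at hfs
    by_cases hb : b = k - 1
    · rw [if_pos hb] at hfs
      refine Or.inl ⟨i, 1, le_refl 1, ?_⟩
      rw [hx, hy, hfs, hb]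
      rw [show k - 1 + k * i + 1 = k + k * i from by
        rw [Nat.add_right_comm, show k - 1 + 1 = k from by omega]]
      rw [show k * i + 1 = 1 + k * i from by ring]
    · rw [if_neg hb] at hfs
      cases i with
      | zero =>
        refine Or.inr (Or.inr ⟨1, le_refl 1, ?_⟩)
        rw [hx, hy, hfs]
        simp
      | succ i' =>
        refine Or.inl ⟨i', k + 1, by omega, ?_⟩
        rw [hx, hy, hfs]
        rw [show k * (i' + 1) + 1 = k + 1 + k * i' from by ring,
          show k * (i' + 1) = k + k * i' from by ring]
  · have hxy : x = a ∧ y = 0 := by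
      have h1 := (List.cons.injEq .. ▸ hU).1
      have h2 := (List.cons.injEq .. ▸ hU).2
      exact ⟨h1, by simpa using h2⟩
    obtain ⟨hx, hy⟩ := hxy
    refine Or.inr (Or.inr ⟨a + 1, by omega, ?_⟩)
    rw [hx, hy, fstep_zero hk]

lemma forward {k : ℕ} (hk : 3 ≤ k) : ∀ n u v, [u, v] <:+: W k n → [u, v] ∈ Bset k := by
  intro n
  induction n with
  | zero =>
    intro u v h
    have := h.length_le
    simp [W] at this
  | succ n ih =>
    intro u v h
    rw [W_succ] at h
    rcases classify _ h with ⟨m, _, hr, hu, hv⟩ | ⟨x, y, hxy, hu, hv⟩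
    · simp only [Bset, Set.mem_setOf_eq]
      have key : ∀ q r mm : ℕ, q + r = mm → r < k → r ≠ k - 1 →
          1 ≤ r + 1 ∧ r + 1 ≤ k - 1 ∧ mm + 1 = (r + 1) + q := by
        intro q r mm h1 h2 h3; omega
      have hK := key (k * (m / k)) (m % k) m (Nat.div_add_mod m k) (Nat.mod_lt _ (by omega)) hr
      refine Or.inr (Or.inl ⟨m / k, m % k + 1, hK.1, hK.2.1, ?_⟩)
      rw [hu, hv, hK.2.2]
    · subst hu hv
      exact step_mem hk (ih x y hxy)

lemma B1_mem {k : ℕ} (hk : 3 ≤ k) (i a : ℕ) (ha : 1 ≤ a) :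
    ∃ n, [a + k * i, k + k * i] <:+: W k n := by
  obtain ⟨n, hn⟩ := mem_letters k (k * i + (k - 2))
  have hr : (k * i + (k - 2)) % k ≠ k - 1 := by
    rw [Nat.mul_add_mod, Nat.mod_eq_of_lt (show k - 2 < k by omega)]
    omega
  have h1 := internal_infix hn hr
  have hdiv : (k * i + (k - 2)) / k = i := by
    rw [Nat.mul_add_div (by omega), Nat.div_eq_of_lt (show k - 2 < k by omega), Nat.add_zero]
  rw [hdiv, show k * i + (k - 2) + 1 = k * i + (k - 1) from by
    rw [Nat.add_assoc, show k - 2 + 1 = k - 1 from by omega]] at h1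
  have h2 := infix_step h1
  have hfs := fstep_eq (show 0 < k by omega) i (k - 1) (by omega)
  rw [if_pos rfl] at hfs
  rw [hfs, show k * i + (k - 1) + 1 = k + k * i from by
    rw [Nat.add_assoc, show k - 1 + 1 = k from by omega]; ring] at h2
  obtain ⟨m, hm⟩ := iter_fix (fstep_fix hk i) h2 (a - 1)
  rw [show k * i + 1 + (a - 1) = a + k * i from by
    rw [Nat.add_assoc, show 1 + (a - 1) = a from by omega]; ring] at hm
  exact ⟨m, hm⟩

lemma B2_mem {k : ℕ} (hk : 3 ≤ k) (i b : ℕ) (hb1 : 1 ≤ b) (hb2 : b ≤ k - 1) :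
    ∃ n, [k * i, b + k * i] <:+: W k n := by
  obtain ⟨n, hn⟩ := mem_letters k (k * i + (b - 1))
  have hr : (k * i + (b - 1)) % k ≠ k - 1 := by
    rw [Nat.mul_add_mod, Nat.mod_eq_of_lt (show b - 1 < k by omega)]
    omega
  have h1 := internal_infix hn hr
  have hdiv : (k * i + (b - 1)) / k = i := by
    rw [Nat.mul_add_div (by omega), Nat.div_eq_of_lt (show b - 1 < k by omega), Nat.add_zero]
  rw [hdiv, show k * i + (b - 1) + 1 = b + k * i from by
    rw [Nat.add_assoc, show b - 1 + 1 = b from by omega]; ring] at h1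
  exact ⟨n + 1, h1⟩

lemma B3_mem {k : ℕ} (hk : 3 ≤ k) (a : ℕ) (ha : 1 ≤ a) :
    ∃ n, [a, 0] <:+: W k n := by
  have hW1 : W k 1 = [0, 1] := by
    have hne : ¬ ((0 : ℕ) % k = k - 1) := by
      rw [Nat.zero_mod]; omega
    simp [W, phi, phiLetter, hne, Nat.zero_mod, show ¬ ((0 : ℕ) = k - 1) from by omega]
  have h1 : [0, 1] <:+: W k 1 := by rw [hW1]
  have h2 := infix_step h1
  have hfs : fstep k 1 = 0 := by
    have h := fstep_eq (show 0 < k by omega) 0 1 (by omega)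
    rw [if_neg (by omega)] at h
    simpa using h
  rw [hfs] at h2
  obtain ⟨m, hm⟩ := iter_fix (fstep_zero hk) h2 (a - 1)
  rw [show 0 + 1 + (a - 1) = a from by omega] at hm
  exact ⟨m, hm⟩


theorem stmt10 (k : ℕ) (hk : 3 ≤ k) :
    {U : List ℕ | U.length = 2 ∧ ∃ n, U <:+: W k n} = Bset k := by
  ext U
  simp only [Set.mem_setOf_eq]
  constructor
  · rintro ⟨hlen, n, hinf⟩
    obtain ⟨u, v, rfl⟩ : ∃ u v, U = [u, v] := by
      rcases U with _ | ⟨u, _ | ⟨v, _ | ⟨w, t⟩⟩⟩ <;> simp at hlen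
      exact ⟨u, v, rfl⟩
    exact forward hk n u v hinf
  · intro hU
    simp only [Bset, Set.mem_setOf_eq] at hU
    rcases hU with ⟨i, a, ha, rfl⟩ | ⟨i, b, hb1, hb2, rfl⟩ | ⟨a, ha, rfl⟩
    · exact ⟨rfl, B1_mem hk i a ha⟩
    · exact ⟨rfl, B2_mem hk i b hb1 hb2⟩
    · exact ⟨rfl, B3_mem hk a ha⟩
end
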